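/- arXiv:1109.0326 — 2 statements merged into one kernel-verified Lean document; each statement's English description precedes it below -/
import Mathlib

section
/- As n → ∞, ‖q_{2n}‖_1 ∼ 2/(2π)^{2n}; that is, lim_{n→∞} (2π)^{2n} · (∫_0^1 |B_{2n}(x) − B_{2n}| dx) / (2n)! = 2. -/
/-!
The Fourier expansion
`B_{2k}(x) - B_{2k} = (-1)^k 2 (2k)! / (2π)^{2k} · ∑_{n ≥ 1} (1 - cos 2πnx) / n^{2k}`
shows that `q_{2k}` has the constant sign `(-1)^k` on `[0,1]`. Hence
`‖q_{2k}‖_1 = |∫_0^1 q_{2k}| = |B_{2k}| / (2k)! = 2 ζ(2k) / (2π)^{2k}`,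
and `ζ(2k) → 1` by dominated convergence of `∑ 1/n^s` as `s → ∞` (Tannery's theorem).
-/

open Filter Real MeasureTheory intervalIntegral

noncomputable def bernPoly (n : ℕ) (x : ℝ) : ℝ :=
  Polynomial.aeval x (Polynomial.bernoulli n)

/-- The `n`-th Bernoulli number `B_n = B_n(0)`, as a real number. -/
noncomputable def bernNum (n : ℕ) : ℝ := (bernoulli n : ℝ)

open scoped Topology Nat

theorem tendsto_tsum_one_div_nat_pow_atTop :
    Tendsto (fun s : ℕ => ∑' n : ℕ, 1 / (n : ℝ) ^ s) atTop (𝓝 1) := by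
  have hlim : ∀ n : ℕ, Tendsto (fun s : ℕ => 1 / (n : ℝ) ^ s) atTop
      (𝓝 (if n = 1 then 1 else 0)) := by
    intro n
    rcases lt_trichotomy n 1 with hn | rfl | hn
    · obtain rfl : n = 0 := by omega
      refine tendsto_const_nhds.congr' ?_
      filter_upwards [eventually_ne_atTop 0] with s hs
      simp [hs]
    · simp
    · have hn' : (1 : ℝ) < n := by exact_mod_cast hn
      simpa [hn.ne', one_div_pow] using tendsto_pow_atTop_nhds_zero_of_lt_one
        (by positivity) ((div_lt_one (by positivity)).mpr hn')
  have hbound : ∀ᶠ s in atTop, ∀ n : ℕ, ‖1 / (n : ℝ) ^ s‖ ≤ 1 / (n : ℝ) ^ 2 := by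
    filter_upwards [eventually_ge_atTop 2] with s hs n
    rcases n.eq_zero_or_pos with rfl | hn
    · simp [show s ≠ 0 by omega]
    · rw [norm_of_nonneg (by positivity)]
      gcongr
      exact_mod_cast hn
  simpa using tendsto_tsum_of_dominated_convergence
    (Real.summable_one_div_nat_pow.mpr one_lt_two) hlim hbound

theorem two_mul_tsum_one_div_nat_pow_two_mul {k : ℕ} (hk : k ≠ 0) :
    2 * ∑' n : ℕ, 1 / (n : ℝ) ^ (2 * k) =
      (2 * π) ^ (2 * k) * ((-1 : ℝ) ^ (k + 1) * bernoulli (2 * k)) / (2 * k)! := by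
  have htwo : (2 : ℝ) ^ (2 * k) = 2 * 2 ^ (2 * k - 1) := (mul_pow_sub_one (by omega) 2).symm
  rw [(hasSum_zeta_nat hk).tsum_eq, mul_pow, htwo]
  ring

theorem hasSum_one_div_nat_pow_mul_one_sub_cos {k : ℕ} (hk : k ≠ 0) {x : ℝ}
    (hx : x ∈ Set.Icc (0 : ℝ) 1) :
    HasSum (fun n : ℕ => 1 / (n : ℝ) ^ (2 * k) * (1 - cos (2 * π * n * x)))
      ((-1 : ℝ) ^ k * (2 * π) ^ (2 * k) / 2 / (2 * k)! *
        (bernoulliFun (2 * k) x - bernoulliFun (2 * k) 0)) := by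
  have hval : (-1 : ℝ) ^ k * (2 * π) ^ (2 * k) / 2 / (2 * k)! *
      (bernoulliFun (2 * k) x - bernoulliFun (2 * k) 0) =
      (-1 : ℝ) ^ (k + 1) * (2 * π) ^ (2 * k) / 2 / (2 * k)! * bernoulliFun (2 * k) 0 -
      (-1 : ℝ) ^ (k + 1) * (2 * π) ^ (2 * k) / 2 / (2 * k)! * bernoulliFun (2 * k) x := by
    ring
  rw [hval]
  refine ((hasSum_one_div_nat_pow_mul_cos hk (Set.left_mem_Icc.mpr zero_le_one)).sub
    (hasSum_one_div_nat_pow_mul_cos hk hx)).congr_fun fun n => ?_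
  rw [mul_zero, cos_zero]
  ring

theorem neg_one_pow_mul_bernoulliFun_sub_nonneg {k : ℕ} (hk : k ≠ 0) {x : ℝ}
    (hx : x ∈ Set.Icc (0 : ℝ) 1) :
    0 ≤ (-1 : ℝ) ^ k * (bernoulliFun (2 * k) x - bernoulliFun (2 * k) 0) := by
  have hc : (0 : ℝ) < (2 * π) ^ (2 * k) / 2 / (2 * k)! := by positivity
  have hsum := (hasSum_one_div_nat_pow_mul_one_sub_cos hk hx).nonneg fun n =>
    mul_nonneg (by positivity) (sub_nonneg.mpr (cos_le_one _))
  rw [show ∀ a b c : ℝ, a * b / 2 / (2 * k)! * c = b / 2 / (2 * k)! * (a * c) by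
    intros; ring] at hsum
  exact (mul_nonneg_iff_of_pos_left hc).mp hsum

theorem integral_abs_bernoulliFun_sub_eval_zero {k : ℕ} (hk : k ≠ 0) :
    ∫ x in (0 : ℝ)..1, |bernoulliFun (2 * k) x - bernoulliFun (2 * k) 0| =
      (-1 : ℝ) ^ (k + 1) * bernoulli (2 * k) := by
  have habs : Set.EqOn (fun x => |bernoulliFun (2 * k) x - bernoulliFun (2 * k) 0|)
      (fun x => (-1 : ℝ) ^ k * (bernoulliFun (2 * k) x - bernoulliFun (2 * k) 0))
      (Set.uIcc 0 1) := fun x hx => by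
    rw [Set.uIcc_of_le zero_le_one] at hx
    dsimp only
    rw [← abs_of_nonneg (neg_one_pow_mul_bernoulliFun_sub_nonneg hk hx), abs_mul,
      abs_neg_one_pow, one_mul]
  rw [integral_congr habs, intervalIntegral.integral_const_mul,
    integral_sub (intervalIntegrable_bernoulliFun _ _ _) intervalIntegrable_const,
    integral_bernoulliFun_eq_zero (by omega), bernoulliFun_eval_zero]
  simp [pow_succ]

lemma bernPoly_eq_bernoulliFun (n : ℕ) (x : ℝ) : bernPoly n x = bernoulliFun n x := by
  rw [bernPoly, bernoulliFun, Polynomial.eval_map, Polynomial.aeval_def]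

lemma bernNum_eq_bernoulliFun_zero (n : ℕ) : bernNum n = bernoulliFun n 0 := by
  rw [bernNum, bernoulliFun_eval_zero]

/-- `‖q_{2n}‖_1 ∼ 2/(2π)^{2n}` as `n → ∞`; that is,
`lim_{n→∞} (2π)^{2n} · (∫_0^1 |B_{2n}(x) − B_{2n}| dx) / (2n)! = 2`. -/
theorem L1_norm_qB_asymptotics :
    Tendsto
      (fun n : ℕ =>
        (2 * π) ^ (2 * n) * (∫ x in (0:ℝ)..1, |bernPoly (2 * n) x - bernNum (2 * n)|) /
          (((2 * n).factorial : ℝ)))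
      atTop (nhds 2) := by
  have hzeta : Tendsto (fun n : ℕ => 2 * ∑' m : ℕ, 1 / (m : ℝ) ^ (2 * n)) atTop (𝓝 (2 * 1)) :=
    (tendsto_tsum_one_div_nat_pow_atTop.comp
      (tendsto_id.const_mul_atTop' two_pos)).const_mul 2
  rw [mul_one] at hzeta
  refine hzeta.congr' ?_
  filter_upwards [eventually_ne_atTop 0] with n hn
  simp_rw [bernPoly_eq_bernoulliFun, bernNum_eq_bernoulliFun_zero]
  rw [integral_abs_bernoulliFun_sub_eval_zero hn, two_mul_tsum_one_div_nat_pow_two_mul hn]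
end

section
/- For every even integer r ≥ 2, as n → ∞, ‖p_n‖_r ∼ (2/(2π)^n) · ( (1·3·5···(r−1)) / (2·4·6···r) )^{1/r}; that is, lim_{n→∞} (2π)^n ‖p_n‖_r = 2 ( (r−1)!!/r!! )^{1/r}. -/
/-!
The Fourier expansion of the Bernoulli polynomials gives, on `[0, 1]` and for `n ≥ 2`,
`(2π)^n p_n(x) = -2 ∑_{m ≥ 1} cos (2πmx - nπ/2) / m^n`.
All terms with `m ≥ 2` together are bounded by `2 ∑_{m ≥ 2} m^{-n} → 0`, so `(2π)^n p_n` is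
uniformly close to the shifted cosine `-2 cos (2πx - nπ/2)`, whose `r`-th power has integral
`2^r (r-1)‼ / r‼` over a period, independently of the shift.
-/

open Filter Real MeasureTheory intervalIntegral Nat

open Set Topology
open scoped Interval

theorem integral_cos_pow_of_even {r : ℕ} (hr : Even r) :
    ∫ x in (0:ℝ)..2 * π, cos x ^ r = 2 * π * ((r - 1)‼ / r‼ : ℝ) := by
  obtain ⟨k, rfl⟩ := hr
  induction k with
  | zero => simp
  | succ k ih =>
    have hodd : (k + 1 + (k + 1) - 1)‼ = (k + k + 1) * (k + k - 1)‼ := by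
      rw [show k + 1 + (k + 1) - 1 = k + k + 1 by omega, doubleFactorial_add_one]
    have heven : (k + 1 + (k + 1))‼ = (k + k + 2) * (k + k)‼ := by
      rw [show k + 1 + (k + 1) = k + k + 2 by omega, doubleFactorial_add_two]
    rw [hodd, heven, show k + 1 + (k + 1) = k + k + 2 by omega, integral_cos_pow, ih]
    simp only [cos_two_pi, sin_two_pi, cos_zero, sin_zero, mul_zero, sub_zero, zero_div,
      zero_add]
    push_cast
    field_simp

theorem integral_cos_two_pi_mul_sub_pow_of_even {r : ℕ} (hr : Even r) (c : ℝ) :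
    ∫ x in (0:ℝ)..1, cos (2 * π * x - c) ^ r = ((r - 1)‼ / r‼ : ℝ) := by
  have hperiodic : Function.Periodic (fun x => cos x ^ r) (2 * π) := fun x => by
    simp only [cos_add_two_pi]
  rw [integral_comp_mul_sub (fun x => cos x ^ r) (by positivity), mul_zero, mul_one,
    zero_sub, show 2 * π - c = -c + 2 * π by ring, hperiodic.intervalIntegral_add_eq (-c) 0,
    zero_add, integral_cos_pow_of_even hr, smul_eq_mul]
  field_simp

theorem bernPoly_eq_eval_map (n : ℕ) (x : ℝ) :
    bernPoly n x = (Polynomial.map (algebraMap ℚ ℝ) (Polynomial.bernoulli n)).eval x := by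
  rw [bernPoly, Polynomial.aeval_def, Polynomial.eval_map]

@[fun_prop]
theorem continuous_bernPoly (n : ℕ) : Continuous (bernPoly n) :=
  Polynomial.continuous_aeval _

theorem hasSum_one_div_nat_pow_mul_cos_sub_mul_pi_div_two {n : ℕ} (hn : 2 ≤ n) {x : ℝ}
    (hx : x ∈ Icc (0:ℝ) 1) :
    HasSum (fun m : ℕ => 1 / (m:ℝ) ^ n * cos (2 * π * m * x - n * π / 2))
      (-((2 * π) ^ n * (bernPoly n x / n !)) / 2) := by
  have hsign (k : ℕ) (a : ℝ) : (-1) ^ k * ((-1) ^ (k + 1) * a) = -a := by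
    rw [← mul_assoc, ← pow_add, Odd.neg_one_pow ⟨k, by ring⟩, neg_one_mul]
  rw [show ∀ a b c : ℝ, -(a * (b / c)) / 2 = -(a / 2 / c * b) by intros; ring]
  obtain ⟨k, rfl | rfl⟩ := Nat.even_or_odd' n
  · have hcos (θ : ℝ) : cos (θ - ↑(2 * k) * π / 2) = (-1) ^ k * cos θ := by
      rw [← cos_sub_nat_mul_pi]; push_cast; ring_nf
    have := (hasSum_one_div_nat_pow_mul_cos (k := k) (by omega) hx).mul_left ((-1) ^ k)
    rw [mul_div_assoc, mul_div_assoc, mul_assoc, hsign, ← bernPoly_eq_eval_map] at this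
    exact this.congr_fun fun m => by rw [hcos]; ring
  · have hcos (θ : ℝ) : cos (θ - ↑(2 * k + 1) * π / 2) = (-1) ^ k * sin θ := by
      rw [← cos_sub_pi_div_two, ← cos_sub_nat_mul_pi]; push_cast; ring_nf
    have := (hasSum_one_div_nat_pow_mul_sin (k := k) (by omega) hx).mul_left ((-1) ^ k)
    rw [mul_div_assoc, mul_div_assoc, mul_assoc, hsign, ← bernPoly_eq_eval_map] at this
    exact this.congr_fun fun m => by rw [hcos]; ring

theorem summable_one_div_nat_add_two_pow {n : ℕ} (hn : 2 ≤ n) :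
    Summable fun m : ℕ => 1 / ((m + 2 : ℕ) : ℝ) ^ n :=
  (summable_nat_add_iff 2).mpr (summable_one_div_nat_pow.mpr hn)

theorem tendsto_tsum_one_div_nat_add_two_pow :
    Tendsto (fun n : ℕ => ∑' m : ℕ, 1 / ((m + 2 : ℕ) : ℝ) ^ n) atTop (𝓝 0) := by
  have hpointwise (m : ℕ) : Tendsto (fun n : ℕ => 1 / ((m + 2 : ℕ) : ℝ) ^ n) atTop (𝓝 0) := by
    simp_rw [← one_div_pow]
    exact tendsto_pow_atTop_nhds_zero_of_lt_one (by positivity)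
      ((div_lt_one (by positivity)).mpr (by norm_cast; omega))
  have hdominated : ∀ᶠ n : ℕ in atTop, ∀ m : ℕ,
      ‖1 / ((m + 2 : ℕ) : ℝ) ^ n‖ ≤ 1 / ((m + 2 : ℕ) : ℝ) ^ 2 := by
    filter_upwards [eventually_ge_atTop 2] with n hn m
    rw [norm_of_nonneg (by positivity)]
    exact one_div_pow_le_one_div_pow_of_le (by norm_cast; omega) hn
  simpa using tendsto_tsum_of_dominated_convergence (summable_one_div_nat_add_two_pow le_rfl)
    hpointwise hdominated

theorem abs_sub_le_tsum_of_hasSum_one_div_nat_pow {n : ℕ} (hn : 2 ≤ n) {g : ℕ → ℝ}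
    (hg : ∀ m, |g m| ≤ 1) {S : ℝ} (hS : HasSum (fun m : ℕ => 1 / (m : ℝ) ^ n * g m) S) :
    |S - g 1| ≤ ∑' m : ℕ, 1 / ((m + 2 : ℕ) : ℝ) ^ n := by
  have htail := (hasSum_nat_add_iff' 2).mpr hS
  simp only [Finset.sum_range_succ, Finset.sum_range_zero, cast_zero, cast_one,
    zero_pow (by omega : n ≠ 0), div_zero, zero_mul, one_pow, div_one, one_mul, zero_add] at htail
  refine htail.norm_le_of_bounded (summable_one_div_nat_add_two_pow hn).hasSum fun m => ?_
  rw [norm_mul, norm_of_nonneg (by positivity)]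
  exact mul_le_of_le_one_right (by positivity) (hg _)

theorem abs_two_pi_pow_mul_bernPoly_div_factorial_add_two_mul_cos_le {n : ℕ} (hn : 2 ≤ n)
    {x : ℝ} (hx : x ∈ Icc (0:ℝ) 1) :
    |(2 * π) ^ n * (bernPoly n x / n !) + 2 * cos (2 * π * x - n * π / 2)|
      ≤ 2 * ∑' m : ℕ, 1 / ((m + 2 : ℕ) : ℝ) ^ n := by
  have h := abs_sub_le_tsum_of_hasSum_one_div_nat_pow hn (fun m => abs_cos_le_one _)
    (hasSum_one_div_nat_pow_mul_cos_sub_mul_pi_div_two hn hx)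
  rw [cast_one, mul_one] at h
  calc |(2 * π) ^ n * (bernPoly n x / n !) + 2 * cos (2 * π * x - n * π / 2)|
      = 2 * |-((2 * π) ^ n * (bernPoly n x / n !)) / 2 - cos (2 * π * x - n * π / 2)| := by
        rw [← abs_two, ← abs_mul, ← abs_neg]; ring_nf
    _ ≤ _ := by gcongr

theorem tendsto_integral_pow_sub_pow_of_abs_sub_le {f g : ℕ → ℝ → ℝ} {ε : ℕ → ℝ} {M a b : ℝ}
    (r : ℕ) (hε : Tendsto ε atTop (𝓝 0)) (hg : ∀ n, ∀ x ∈ Ι a b, |g n x| ≤ M)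
    (hfg : ∀ᶠ n in atTop, ∀ x ∈ Ι a b, |f n x - g n x| ≤ ε n) :
    Tendsto (fun n => ∫ x in a..b, (f n x ^ r - g n x ^ r)) atTop (𝓝 0) := by
  set C := r * (M + 1) ^ (r - 1) * |b - a|
  have hbound : ∀ᶠ n in atTop, ‖∫ x in a..b, (f n x ^ r - g n x ^ r)‖ ≤ ε n * C := by
    filter_upwards [hfg, hε.eventually (eventually_le_nhds one_pos)] with n hfgn hεn
    have hpointwise (x : ℝ) (hx : x ∈ Ι a b) :
        ‖f n x ^ r - g n x ^ r‖ ≤ ε n * (r * (M + 1) ^ (r - 1)) := by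
      have hf : |f n x| ≤ M + 1 := by
        linarith [abs_sub_abs_le_abs_sub (f n x) (g n x), hg n x hx, hfgn x hx]
      calc ‖f n x ^ r - g n x ^ r‖ ≤ |f n x - g n x| * r * max |f n x| |g n x| ^ (r - 1) :=
            abs_pow_sub_pow_le ..
        _ ≤ ε n * (r * (M + 1) ^ (r - 1)) := by
            have hmax : max |f n x| |g n x| ≤ M + 1 := max_le hf (by linarith [hg n x hx])
            have hε0 : 0 ≤ ε n := (abs_nonneg _).trans (hfgn x hx)
            rw [mul_assoc]
            gcongr
            exact hfgn x hx
    exact (norm_integral_le_of_norm_le_const hpointwise).trans_eq (by ring)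
  exact squeeze_zero_norm' hbound (by simpa using hε.mul_const C)

theorem tendsto_integral_two_pi_pow_mul_bernPoly_div_factorial_pow {r : ℕ} (hr : Even r) :
    Tendsto (fun n : ℕ => ∫ x in (0:ℝ)..1, ((2 * π) ^ n * (bernPoly n x / n !)) ^ r) atTop
      (𝓝 (2 ^ r * ((r - 1)‼ / r‼ : ℝ))) := by
  set F : ℕ → ℝ → ℝ := fun n x => (2 * π) ^ n * (bernPoly n x / n !)
  set G : ℕ → ℝ → ℝ := fun n x => -2 * cos (2 * π * x - n * π / 2)
  have hG_integral (n : ℕ) : ∫ x in (0:ℝ)..1, G n x ^ r = 2 ^ r * ((r - 1)‼ / r‼ : ℝ) := by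
    simp only [G, mul_pow, hr.neg_pow, intervalIntegral.integral_const_mul,
      integral_cos_two_pi_mul_sub_pow_of_even hr]
  have hdiff : Tendsto (fun n => ∫ x in (0:ℝ)..1, (F n x ^ r - G n x ^ r)) atTop (𝓝 0) := by
    refine tendsto_integral_pow_sub_pow_of_abs_sub_le (M := 2) r
      (by simpa using tendsto_tsum_one_div_nat_add_two_pow.const_mul 2) (fun n x _ => ?_) ?_
    · simpa [G, abs_mul] using abs_cos_le_one _
    · filter_upwards [eventually_ge_atTop 2] with n hn x hx
      rw [uIoc_of_le zero_le_one] at hx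
      simpa [F, G, sub_neg_eq_add] using
        abs_two_pi_pow_mul_bernPoly_div_factorial_add_two_mul_cos_le hn (Ioc_subset_Icc_self hx)
  have hshifted := hdiff.add_const (2 ^ r * ((r - 1)‼ / r‼ : ℝ))
  rw [zero_add] at hshifted
  refine hshifted.congr fun n => ?_
  rw [integral_sub ((by fun_prop : Continuous fun x => F n x ^ r).intervalIntegrable 0 1)
    ((by fun_prop : Continuous fun x => G n x ^ r).intervalIntegrable 0 1), hG_integral,
    sub_add_cancel]

theorem mul_integral_abs_rpow_rpow_of_even {f : ℝ → ℝ} {c a b : ℝ} {r : ℕ} (hr : Even r)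
    (hr0 : r ≠ 0) (hc : 0 ≤ c) (hab : a ≤ b) :
    c * (∫ x in a..b, |f x| ^ (r : ℝ)) ^ (1 / (r : ℝ))
      = (∫ x in a..b, (c * f x) ^ r) ^ (1 / (r : ℝ)) := by
  simp only [rpow_natCast, hr.pow_abs, mul_pow, intervalIntegral.integral_const_mul]
  have hI : 0 ≤ ∫ x in a..b, f x ^ r := integral_nonneg hab fun x _ => hr.pow_nonneg _
  rw [mul_rpow (by positivity) hI, one_div, pow_rpow_inv_natCast hc hr0]

/-- For every even integer `r ≥ 2`,
`‖p_n‖_r ∼ (2/(2π)^n) · ((1·3·5···(r−1)) / (2·4·6···r))^{1/r}` as `n → ∞`, where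
`p_n(x) = B_n(x)/n!`; that is, `lim_{n→∞} (2π)^n ‖p_n‖_r = 2 ((r−1)!!/r!!)^{1/r}`. -/
theorem Lr_norm_pB_asymptotics_even (r : ℕ) (hr : 2 ≤ r) (hreven : Even r) :
    Tendsto
      (fun n : ℕ =>
        (2 * π) ^ n *
          (∫ x in (0:ℝ)..1, |bernPoly n x / (n.factorial : ℝ)| ^ (r : ℝ)) ^ (1 / (r : ℝ)))
      atTop
      (nhds (2 * ((((r - 1).doubleFactorial : ℝ)) / ((r.doubleFactorial : ℝ))) ^ (1 / (r : ℝ)))) := by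
  have hr0 : r ≠ 0 := by omega
  have hlimit : 2 * ((r - 1)‼ / r‼ : ℝ) ^ (1 / (r : ℝ))
      = (2 ^ r * ((r - 1)‼ / r‼ : ℝ)) ^ (1 / (r : ℝ)) := by
    rw [mul_rpow (by positivity) (by positivity), one_div, pow_rpow_inv_natCast zero_le_two hr0]
  have hnorm (n : ℕ) := mul_integral_abs_rpow_rpow_of_even (f := fun x => bernPoly n x / n !)
    hreven hr0 (pow_nonneg two_pi_pos.le n) zero_le_one
  rw [hlimit]
  exact (((continuousAt_rpow_const _ _ (Or.inl (by positivity))).tendsto).comp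
    (tendsto_integral_two_pi_pow_mul_bernPoly_div_factorial_pow hreven)).congr
    fun n => (hnorm n).symm
end
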